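/- arXiv:2312.11831 — 3 statements merged into one kernel-verified Lean document; each statement's English description precedes it below -/
import Mathlib

section
/- Because WeakAXp is monotone, the two definitions of abductive explanation coincide: for any X ⊆ F, X satisfies WeakAXp(X) together with ∀ X' ⊊ X, ¬WeakAXp(X') if and only if X satisfies WeakAXp(X) together with ∀ j ∈ X, ¬WeakAXp(X \ {j}). In other words, a set is a subset-minimal weak AXp iff it is a locally-minimal weak AXp. -/
/-- `WeakAXp X` holds iff every point of feature space agreeing with `v` on `X`
is assigned the same class `c = κ v`. -/
def WeakAXp {m : ℕ} {D : Fin m → Type*} {K : Type*}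
    (κ : (∀ i, D i) → K) (v : ∀ i, D i) (X : Finset (Fin m)) : Prop :=
  ∀ x : ∀ i, D i, (∀ i ∈ X, x i = v i) → κ x = κ v

theorem Finset.minimal_iff_forall_sdiff_singleton {α : Type*} [DecidableEq α]
    {P : Finset α → Prop} {s : Finset α} (hP : ∀ ⦃s t⦄, P t → t ⊆ s → P s) :
    Minimal P s ↔ P s ∧ ∀ x ∈ s, ¬ P (s \ {x}) := by
  refine ⟨fun h ↦ ⟨h.1, fun x hxs hx ↦ ?_⟩, fun h ↦ minimal_iff_forall_lt.2 ⟨h.1, ?_⟩⟩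
  · exact (mem_sdiff.1 (h.2 hx sdiff_subset hxs)).2 (mem_singleton_self x)
  · intro t hts ht
    obtain ⟨x, hxs, htx⟩ := ssubset_iff_exists_subset_erase.1 hts
    exact h.2 x hxs (hP ht (sdiff_singleton_eq_erase x s ▸ htx))

theorem WeakAXp.mono {m : ℕ} {D : Fin m → Type*} {K : Type*} {κ : (∀ i, D i) → K}
    {v : ∀ i, D i} {X Y : Finset (Fin m)} (hX : WeakAXp κ v X) (hXY : X ⊆ Y) :
    WeakAXp κ v Y :=
  fun x hx ↦ hX x fun i hi ↦ hx i (hXY hi)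

theorem axp_iff_locally_minimal_axp_general
    {m : ℕ} {D : Fin m → Type*}
    {K : Type*} (κ : (∀ i, D i) → K) (v : ∀ i, D i) (X : Finset (Fin m)) :
    (WeakAXp κ v X ∧ ∀ X' ⊂ X, ¬ WeakAXp κ v X') ↔
    (WeakAXp κ v X ∧ ∀ j ∈ X, ¬ WeakAXp κ v (X \ {j})) :=
  minimal_iff_forall_lt.symm.trans
    (Finset.minimal_iff_forall_sdiff_singleton fun _ _ h hts ↦ h.mono hts)

/-- A set is a subset-minimal weak AXp iff it is a locally-minimal weak AXp. -/
theorem axp_iff_locally_minimal_axp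
    {m : ℕ} {D : Fin m → Type*} [∀ i, Fintype (D i)] [∀ i, Nonempty (D i)]
    {K : Type*} (κ : (∀ i, D i) → K) (v : ∀ i, D i) (X : Finset (Fin m)) :
    (WeakAXp κ v X ∧ ∀ X' ⊂ X, ¬ WeakAXp κ v X') ↔
    (WeakAXp κ v X ∧ ∀ j ∈ X, ¬ WeakAXp κ v (X \ {j})) :=
  axp_iff_locally_minimal_axp_general κ v X
end

section
/- The predicate WeakPAXp is not monotone: there exist a finite set of features F, finite nonempty domains D_i, a classifier κ : 𝔽 → K on the corresponding feature space 𝔽, a point v ∈ 𝔽 with c = κ(v), a threshold Τ ∈ [0,1], and sets X ⊆ X' ⊆ F such that WeakPAXp(X) holds with threshold Τ but WeakPAXp(X') does not. -/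
/-- `WeakPAXp X` (with threshold `Τ`): the fraction of points of feature space
agreeing with `v` on `X` that are assigned the class `c = κ v` is at least `Τ`. -/
def WeakPAXp {m : ℕ} {D : Fin m → Type*} {K : Type*}
    (κ : (∀ i, D i) → K) (v : ∀ i, D i) (Τ : ℝ) (X : Finset (Fin m)) : Prop :=
  (Nat.card {x : ∀ i, D i // κ x = κ v ∧ ∀ i ∈ X, x i = v i} : ℝ) /
      (Nat.card {x : ∀ i, D i // ∀ i ∈ X, x i = v i} : ℝ) ≥ Τ

/-- The predicate `WeakPAXp` is not monotone: there exist a classification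
problem, an instance, a threshold and sets `X ⊆ X'` such that `WeakPAXp X`
holds but `WeakPAXp X'` does not. -/
theorem weakPAXp_not_monotone :
    ∃ (m : ℕ) (D : Fin m → Type) (_ : ∀ i, Fintype (D i)) (_ : ∀ i, Nonempty (D i))
      (K : Type) (κ : (∀ i, D i) → K) (v : ∀ i, D i) (Τ : ℝ)
      (X X' : Finset (Fin m)),
      Τ ∈ Set.Icc (0 : ℝ) 1 ∧ X ⊆ X' ∧
      WeakPAXp κ v Τ X ∧ ¬ WeakPAXp κ v Τ X' := by
  refine ⟨2, fun _ => Bool, fun _ => inferInstance, fun _ => inferInstance, Bool,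
    fun x => !(x 0) || x 1, fun _ => true, 3/4, ∅, {0}, ⟨by norm_num, by norm_num⟩,
    by simp, ?_, ?_⟩
  · unfold WeakPAXp
    rw [Nat.card_eq_fintype_card, Nat.card_eq_fintype_card]
    norm_num
    rw [show (Fintype.card {x : Fin 2 → Bool // x 0 = false ∨ x 1 = true}) = 3 by decide]
    norm_num
  · unfold WeakPAXp
    rw [Nat.card_eq_fintype_card, Nat.card_eq_fintype_card]
    norm_num
    rw [show (Fintype.card {x : Fin 2 → Bool // (x 0 = false ∨ x 1 = true) ∧ x 0 = true}) = 1 by decide]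
    rw [show (Fintype.card {x : Fin 2 → Bool // x 0 = true}) = 2 by decide]
    norm_num
end

section
/- There can exist locally-minimal PAXp's that are not subset-minimal PAXp's: there exist a finite set of features F, finite nonempty domains D_i, a classifier κ : 𝔽 → K on the corresponding feature space 𝔽, a point v ∈ 𝔽 with c = κ(v), a threshold Τ ∈ [0,1], and a set X ⊆ F such that LmPAXp(X) holds but PAXp(X) does not. -/
/-- `PAXp X`: `X` is a subset-minimal weak PAXp. -/
def PAXp {m : ℕ} {D : Fin m → Type*} {K : Type*}
    (κ : (∀ i, D i) → K) (v : ∀ i, D i) (Τ : ℝ) (X : Finset (Fin m)) : Prop :=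
  WeakPAXp κ v Τ X ∧ ∀ X' ⊂ X, ¬ WeakPAXp κ v Τ X'

/-- `LmPAXp X`: `X` is a locally-minimal weak PAXp. -/
def LmPAXp {m : ℕ} {D : Fin m → Type*} {K : Type*}
    (κ : (∀ i, D i) → K) (v : ∀ i, D i) (Τ : ℝ) (X : Finset (Fin m)) : Prop :=
  WeakPAXp κ v Τ X ∧ ∀ j ∈ X, ¬ WeakPAXp κ v Τ (X \ {j})

/-- There can exist locally-minimal PAXp's that are not subset-minimal PAXp's. -/
theorem lmpaxp_not_paxp :
    ∃ (m : ℕ) (D : Fin m → Type) (_ : ∀ i, Fintype (D i)) (_ : ∀ i, Nonempty (D i))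
      (K : Type) (κ : (∀ i, D i) → K) (v : ∀ i, D i) (Τ : ℝ)
      (X : Finset (Fin m)),
      Τ ∈ Set.Icc (0 : ℝ) 1 ∧ LmPAXp κ v Τ X ∧ ¬ PAXp κ v Τ X := by
  refine ⟨2, fun _ => Fin 3, fun _ => inferInstance, fun _ => inferInstance, Bool,
    fun x => (x 0 == 0) == (x 1 == 0), fun _ => 0, 1/2, Finset.univ, ⟨by norm_num, by norm_num⟩,
    ⟨?_, ?_⟩, ?_⟩
  · unfold WeakPAXp
    simp only [Nat.card_eq_fintype_card]
    norm_num
    rw [show Fintype.card { x : ∀ _ : Fin 2, Fin 3 // (x 0 = 0 ↔ x 1 = 0) ∧ x 0 = 0 ∧ x 1 = 0 } = 1 by decide,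
        show Fintype.card { x : ∀ _ : Fin 2, Fin 3 // x 0 = 0 ∧ x 1 = 0 } = 1 by decide]
    norm_num
  · intro j hj
    fin_cases j
    · unfold WeakPAXp
      simp only [Nat.card_eq_fintype_card]
      norm_num
      rw [show Fintype.card { x : ∀ _ : Fin 2, Fin 3 // (x 0 = 0 ↔ x 1 = 0) ∧ x 1 = 0 } = 1 by decide,
          show Fintype.card { x : ∀ _ : Fin 2, Fin 3 // x 1 = 0 } = 3 by decide]
      norm_num
    · unfold WeakPAXp
      simp only [Nat.card_eq_fintype_card]
      norm_num
      rw [show Fintype.card { x : ∀ _ : Fin 2, Fin 3 // (x 0 = 0 ↔ x 1 = 0) ∧ x 0 = 0 } = 1 by decide,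
          show Fintype.card { x : ∀ _ : Fin 2, Fin 3 // x 0 = 0 } = 3 by decide]
      norm_num
  · rintro ⟨-, h⟩
    refine h ∅ (Finset.empty_ssubset.mpr Finset.univ_nonempty) ?_
    unfold WeakPAXp
    simp only [Nat.card_eq_fintype_card]
    norm_num
    rw [show Fintype.card { x : ∀ _ : Fin 2, Fin 3 // x 0 = 0 ↔ x 1 = 0 } = 5 by decide]
    norm_num
end
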